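/- For every real number q with q > 0 and q ≠ 1 and all natural numbers s, r, setting N = s + r, the following identity holds: (N+1)_{q^2} · q^{−Ns − 2r + s(s−2)} · [N choose s]_q · Σ_{k=0}^{r} ((q^{−2r};q^2)_k / (q^2;q^2)_k) · q^{2(s+k)} / (s+k+1)_{q^2} = 1. (With N = 2j, s = j+m, r = j−m, this is the scalar content of the orthonormality (Ψ^j_m, Ψ^j_m) = 1 of the monomials Ψ^j_m(x) = q^{−j(j+m)−(j−m)} [2j choose j+m]_q^{1/2} x^{j+m} with respect to the inner product (f,g) = (2j+1)_{q^2} H[f(x)^* e^{−jz^*} e^{−jz} g(x)], after the Haar values H[ζ^m] = q^{2m}/(m+1)_{q^2} have been inserted.) -/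

import Mathlib

/-!
Write `Q = q²`. The `k`-th summand is `(1 - Q) Q^s c_{r,k} / (1 - Q^{s+1} Q^k)` with
`c_{r,k} = (Q^{-r};Q)_k Q^k / (Q;Q)_k`, so the sum is an instance of the terminating
q-Chu–Vandermonde evaluation `Σ_k c_{r,k} / (1 - u Q^k) = u^r (Q;Q)_r / (u;Q)_{r+1}` at
`u = Q^{s+1}`. That evaluation follows by induction on `r`: the coefficients satisfy the
Pascal-type rule `c_{r+1,k+1} = c_{r,k+1} - Q^{-r} c_{r,k}`, hence the sums `S_r(u)` satisfy
`S_{r+1}(u) = S_r(u) - Q^{-r} S_r(Qu)`, and so does the right-hand side. Finally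
`[n]_q! = q^{-C(n,2)} (Q;Q)_n / (1 - Q)^n` turns the symmetric binomial into `q^{-sr}` times a
ratio of q-Pochhammer symbols, after which everything cancels.
-/

/-- The q-shifted factorial `(a;q)_n = ∏_{i=0}^{n-1} (1 - a q^i)`. -/
def qPoch (a q : ℝ) (n : ℕ) : ℝ := ∏ i ∈ Finset.range n, (1 - a * q ^ i)

/-- The q-number `(n)_q = (1 - q^n)/(1 - q)`. -/
noncomputable def qNum (q : ℝ) (n : ℕ) : ℝ := (1 - q ^ n) / (1 - q)

/-- The symmetric q-integer `[m]_q = (q^m − q^{−m})/(q − q^{−1})`. -/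
noncomputable def qIntSym (q : ℝ) (m : ℕ) : ℝ := (q ^ (m : ℤ) - q ^ (-(m : ℤ))) / (q - q⁻¹)

/-- The symmetric q-factorial `[n]_q! = ∏_{i=1}^{n} [i]_q`. -/
noncomputable def qFactSym (q : ℝ) (n : ℕ) : ℝ := ∏ i ∈ Finset.range n, qIntSym q (i + 1)

/-- The q-binomial coefficient `[N choose s]_q = [N]_q!/([s]_q! [N−s]_q!)`. -/
noncomputable def qBinomSym (q : ℝ) (N s : ℕ) : ℝ :=
  qFactSym q N / (qFactSym q s * qFactSym q (N - s))

open Finset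

theorem qPoch_succ (a Q : ℝ) (n : ℕ) : qPoch a Q (n + 1) = qPoch a Q n * (1 - a * Q ^ n) :=
  prod_range_succ _ _

theorem qPoch_add (a Q : ℝ) (m n : ℕ) :
    qPoch a Q (m + n) = qPoch a Q m * qPoch (a * Q ^ m) Q n := by
  simp only [qPoch, prod_range_add, pow_add, mul_assoc]

theorem qPoch_succ' (a Q : ℝ) (n : ℕ) : qPoch a Q (n + 1) = (1 - a) * qPoch (a * Q) Q n := by
  rw [add_comm, qPoch_add, pow_one]
  simp [qPoch]

theorem qPoch_self_add_succ (Q : ℝ) (m n : ℕ) :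
    qPoch Q Q (m + n + 1) = qPoch Q Q m * qPoch (Q ^ (m + 1)) Q (n + 1) := by
  rw [add_assoc, qPoch_add, pow_succ']

theorem qPoch_zpow_neg_succ_self {Q : ℝ} (hQ : Q ≠ 0) (r : ℕ) :
    qPoch (Q ^ (-(r : ℤ))) Q (r + 1) = 0 := by
  rw [qPoch_succ, zpow_neg, zpow_natCast, inv_mul_cancel₀ (pow_ne_zero r hQ), sub_self, mul_zero]

theorem qPoch_self_ne_zero {Q : ℝ} (hQ0 : 0 ≤ Q) (hQ1 : Q ≠ 1) (n : ℕ) :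
    qPoch Q Q n ≠ 0 := by
  refine prod_ne_zero_iff.mpr fun i _ ↦ ?_
  rw [sub_ne_zero, ← pow_succ', ne_comm, Ne, pow_eq_one_iff_of_nonneg hQ0 i.succ_ne_zero]
  exact hQ1

theorem one_sub_pow_succ_ne_zero {Q : ℝ} (hQ : ∀ n, qPoch Q Q n ≠ 0) (n : ℕ) :
    1 - Q ^ (n + 1) ≠ 0 := by
  have h := hQ (n + 1)
  rw [qPoch_succ, ← pow_succ'] at h
  exact right_ne_zero_of_mul h

noncomputable def qChuCoeff (Q : ℝ) (r k : ℕ) : ℝ :=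
  qPoch (Q ^ (-(r : ℤ))) Q k * Q ^ k / qPoch Q Q k

section QChu

variable {Q : ℝ}

theorem qChuCoeff_zero_right (r : ℕ) : qChuCoeff Q r 0 = 1 := by
  simp [qChuCoeff, qPoch]

theorem qChuCoeff_succ_self (hQ : Q ≠ 0) (r : ℕ) : qChuCoeff Q r (r + 1) = 0 := by
  rw [qChuCoeff, qPoch_zpow_neg_succ_self hQ, zero_mul, zero_div]

theorem qChuCoeff_succ_succ (hQ0 : Q ≠ 0) (hQ : ∀ n, qPoch Q Q n ≠ 0) (r k : ℕ) :
    qChuCoeff Q (r + 1) (k + 1) = qChuCoeff Q r (k + 1) - Q ^ (-(r : ℤ)) * qChuCoeff Q r k := by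
  have ht : Q ^ (-((r + 1 : ℕ) : ℤ)) = Q ^ (-(r : ℤ)) / Q := by
    rw [Nat.cast_succ, neg_add, zpow_add₀ hQ0, zpow_neg_one, div_eq_mul_inv]
  obtain ⟨hPk, hk⟩ := mul_ne_zero_iff.mp (qPoch_succ Q Q k ▸ hQ (k + 1))
  simp only [qChuCoeff, ht, qPoch_succ' (_ / Q), div_mul_cancel₀ _ hQ0, qPoch_succ]
  generalize Q ^ (-(r : ℤ)) = t
  field_simp
  ring

theorem sum_qChuCoeff_div (hQ0 : Q ≠ 0) (hQ : ∀ n, qPoch Q Q n ≠ 0) (r : ℕ) (u : ℝ)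
    (hu : qPoch u Q (r + 1) ≠ 0) :
    ∑ k ∈ range (r + 1), qChuCoeff Q r k / (1 - u * Q ^ k) =
      u ^ r * qPoch Q Q r / qPoch u Q (r + 1) := by
  induction r generalizing u with
  | zero => simp [qChuCoeff_zero_right, qPoch]
  | succ r ih =>
    obtain ⟨hu', hu_last⟩ := mul_ne_zero_iff.mp (qPoch_succ u Q (r + 1) ▸ hu)
    obtain ⟨hu_first, huQ⟩ := mul_ne_zero_iff.mp (qPoch_succ' u Q (r + 1) ▸ hu)
    have hshift (v : ℝ) : ∑ k ∈ range (r + 1), qChuCoeff Q r k / (1 - v * Q ^ k) =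
        ∑ k ∈ range (r + 1), qChuCoeff Q r (k + 1) / (1 - v * Q ^ (k + 1)) + 1 / (1 - v) := by
      rw [sum_range_succ (fun k ↦ qChuCoeff Q r (k + 1) / _) r, qChuCoeff_succ_self hQ0, zero_div,
        add_zero, sum_range_succ', qChuCoeff_zero_right, pow_zero, mul_one]
    have hrec : ∑ k ∈ range (r + 2), qChuCoeff Q (r + 1) k / (1 - u * Q ^ k) =
        ∑ k ∈ range (r + 1), qChuCoeff Q r k / (1 - u * Q ^ k) -
          Q ^ (-(r : ℤ)) * ∑ k ∈ range (r + 1), qChuCoeff Q r k / (1 - u * Q * Q ^ k) := by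
      rw [hshift, sum_range_succ', qChuCoeff_zero_right, pow_zero, mul_one]
      simp only [qChuCoeff_succ_succ hQ0 hQ, sub_div, sum_sub_distrib, mul_div_assoc, ← mul_sum,
        pow_succ', mul_assoc]
      ring
    have hPoch_two_ways : qPoch u Q (r + 1) * (1 - u * Q ^ (r + 1)) = (1 - u) * qPoch (u * Q) Q (r + 1) := by
      rw [← qPoch_succ, ← qPoch_succ']
    rw [hrec, ih u hu', ih (u * Q) huQ, qPoch_succ u Q (r + 1), qPoch_succ Q Q r, mul_pow,
      zpow_neg, zpow_natCast]
    field_simp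
    linear_combination -(u ^ r * qPoch Q Q r) * hPoch_two_ways

theorem sum_qPoch_div_qNum (hQ0 : Q ≠ 0) (hQ : ∀ n, qPoch Q Q n ≠ 0) (s r : ℕ) :
    ∑ k ∈ range (r + 1),
        qPoch (Q ^ (-(r : ℤ))) Q k / qPoch Q Q k * Q ^ (s + k) / qNum Q (s + k + 1) =
      (1 - Q) * Q ^ ((s + 1) * r + s) * qPoch Q Q s * qPoch Q Q r / qPoch Q Q (s + r + 1) := by
  have hQ1 : 1 - Q ≠ 0 := by simpa using one_sub_pow_succ_ne_zero hQ 0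
  have hu : qPoch (Q ^ (s + 1)) Q (r + 1) ≠ 0 := by
    have h := hQ (s + r + 1)
    rw [qPoch_self_add_succ] at h
    exact right_ne_zero_of_mul h
  have hterm (k : ℕ) :
      qPoch (Q ^ (-(r : ℤ))) Q k / qPoch Q Q k * Q ^ (s + k) / qNum Q (s + k + 1) =
        (1 - Q) * Q ^ s * (qChuCoeff Q r k / (1 - Q ^ (s + 1) * Q ^ k)) := by
    have hN := one_sub_pow_succ_ne_zero hQ (s + k)
    rw [qChuCoeff, qNum, ← pow_add, add_right_comm, pow_add Q s k]
    field_simp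
  have hPs := hQ s
  rw [sum_congr rfl fun k _ ↦ hterm k, ← mul_sum, sum_qChuCoeff_div hQ0 hQ r _ hu,
    qPoch_self_add_succ]
  field_simp
  ring

end QChu

theorem Nat.choose_two_add (m n : ℕ) : (m + n).choose 2 = m.choose 2 + n.choose 2 + m * n := by
  induction n with
  | zero => simp
  | succ n ih =>
    rw [← add_assoc, Nat.choose_succ_succ (m + n) 1, Nat.choose_one_right, ih,
      Nat.choose_succ_succ n 1, Nat.choose_one_right]
    ring

section SymmetricQ

variable {q : ℝ}

theorem qIntSym_succ (hq0 : q ≠ 0) (hq2 : q ^ 2 ≠ 1) (n : ℕ) :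
    qIntSym q (n + 1) = (1 - (q ^ 2) ^ (n + 1)) / ((1 - q ^ 2) * q ^ n) := by
  have h : q - q⁻¹ ≠ 0 := by
    rw [sub_ne_zero]; intro h; apply hq2; field_simp at h; linarith
  rw [qIntSym, zpow_neg, zpow_natCast]
  field_simp
  ring

theorem qFactSym_eq_qPoch_div (hq0 : q ≠ 0) (hq2 : q ^ 2 ≠ 1) (n : ℕ) :
    qFactSym q n = qPoch (q ^ 2) (q ^ 2) n / ((1 - q ^ 2) ^ n * q ^ n.choose 2) := by
  induction n with
  | zero => simp [qFactSym, qPoch]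
  | succ n ih =>
    rw [qFactSym, prod_range_succ, ← qFactSym, ih, qIntSym_succ hq0 hq2, qPoch_succ,
      Nat.choose_succ_succ', Nat.choose_one_right]
    field_simp
    ring

theorem qBinomSym_add_eq_qPoch_div (hq0 : q ≠ 0) (hq2 : q ^ 2 ≠ 1) (s r : ℕ) :
    qBinomSym q (s + r) s =
      qPoch (q ^ 2) (q ^ 2) (s + r) /
        (qPoch (q ^ 2) (q ^ 2) s * qPoch (q ^ 2) (q ^ 2) r * q ^ (s * r)) := by
  simp only [qBinomSym, Nat.add_sub_cancel_left, qFactSym_eq_qPoch_div hq0 hq2,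
    Nat.choose_two_add]
  field_simp
  ring

end SymmetricQ

/-- with `N = s + r` (`N = 2j`, `s = j+m`, `r = j−m`), the scalar content of
the orthonormality `(Ψ^j_m, Ψ^j_m) = 1`:
`(N+1)_{q²} · q^{−Ns−2r+s(s−2)} · [N choose s]_q ·
 Σ_{k=0}^{r} ((q^{−2r};q²)_k/(q²;q²)_k) q^{2(s+k)}/(s+k+1)_{q²} = 1`. -/
theorem orthonormality_scalar (q : ℝ) (hq : 0 < q) (hq1 : q ≠ 1) (s r : ℕ) :
    qNum (q ^ 2) (s + r + 1) *
        q ^ (-((s : ℤ) + (r : ℤ)) * (s : ℤ) - 2 * (r : ℤ) + (s : ℤ) * ((s : ℤ) - 2)) *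
        qBinomSym q (s + r) s *
        ∑ k ∈ Finset.range (r + 1),
          (qPoch (q ^ (-2 * (r : ℤ))) (q ^ 2) k / qPoch (q ^ 2) (q ^ 2) k) *
            q ^ (2 * (s + k)) / qNum (q ^ 2) (s + k + 1)
      = 1 := by
  have hq0 : q ≠ 0 := hq.ne'
  have hq2 : q ^ 2 ≠ 1 := by rwa [Ne, pow_eq_one_iff_of_nonneg hq.le two_ne_zero]
  have hP := qPoch_self_ne_zero (sq_nonneg q) hq2
  have hneg : q ^ (-2 * (r : ℤ)) = (q ^ 2) ^ (-(r : ℤ)) := by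
    rw [show -2 * (r : ℤ) = 2 * -(r : ℤ) by ring, zpow_mul, zpow_ofNat]
  have hexp : q ^ (-((s : ℤ) + (r : ℤ)) * (s : ℤ) - 2 * (r : ℤ) + (s : ℤ) * ((s : ℤ) - 2)) =
      (q ^ (s * r + 2 * s + 2 * r))⁻¹ := by
    rw [← zpow_natCast, ← zpow_neg]
    congr 1
    push_cast
    ring
  simp only [hneg, pow_mul]
  rw [sum_qPoch_div_qNum (pow_ne_zero 2 hq0) hP, hexp, qBinomSym_add_eq_qPoch_div hq0 hq2, qNum,
    qPoch_succ, ← pow_succ']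
  have hN := one_sub_pow_succ_ne_zero hP (s + r)
  have hPs := hP s
  have hPr := hP r
  have hPsr := hP (s + r)
  field_simp
  ring
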